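/- Let $1 \le p, q \le \infty$ and $\alpha < n(1 - 1/q)$. Then every $f$ in the homogeneous Herz space $\dot K_q^{\alpha,p}$ is locally integrable on $\mathbb{R}^n$, and for every Schwartz function $\varphi$ the integral $\int_{\mathbb{R}^n} f(x)\varphi(x)\,dx$ converges absolutely, so that $f$ defines a tempered distribution on $\mathbb{R}^n$. -/

import Mathlib

/-!
Hölder's inequality on the dyadic annulus `C_k` gives
`∫_{C_k} |f| ≤ ‖f χ_k‖_q |C_k|^{1-1/q} ≲ 2^{kε} ‖f‖_{K̇_q^{α,p}}` with `ε = n(1 - 1/q) - α > 0`,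
because every term of the Herz norm is bounded by the whole norm. These bounds sum geometrically
over the annuli inside a ball, so `f` is locally integrable. A Schwartz function is bounded by
`C_N 2^{-kN}` on `C_k`; taking `N > ε` makes the sum over the annuli outside the unit ball converge
as well.
-/

open MeasureTheory ENNReal

noncomputable section

/-- `n`-dimensional Euclidean space. -/
abbrev Eu (n : ℕ) := EuclideanSpace ℝ (Fin n)

/-- The dyadic annulus `C_k = {x : 2^(k-1) < |x| ≤ 2^k}`. -/
def annulus (n : ℕ) (k : ℤ) : Set (Eu n) :=
  {x | (2:ℝ) ^ (k - 1) < ‖x‖ ∧ ‖x‖ ≤ (2:ℝ) ^ k}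

/-- The homogeneous Herz quasi-norm `‖f‖_{K̇_q^{α,p}}`
(`p` is the outer sequence exponent, `q` the Lebesgue exponent),
with the usual supremum modification when `p = ∞`. -/
def herzNorm (n : ℕ) (α : ℝ) (p q : ℝ≥0∞) (f : Eu n → ℝ) : ℝ≥0∞ :=
  if p = ∞ then
    ⨆ k : ℤ, (2:ℝ≥0∞) ^ ((k:ℝ) * α) * eLpNorm ((annulus n k).indicator f) q volume
  else
    (∑' k : ℤ, ((2:ℝ≥0∞) ^ ((k:ℝ) * α) *
      eLpNorm ((annulus n k).indicator f) q volume) ^ p.toReal) ^ (1 / p.toReal)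

open Metric Set

lemma ENNReal.two_rpow_add (a b : ℝ) : (2 : ℝ≥0∞) ^ (a + b) = 2 ^ a * 2 ^ b :=
  ENNReal.rpow_add a b two_ne_zero ofNat_ne_top

lemma ENNReal.ofReal_two_rpow (a : ℝ) : ENNReal.ofReal ((2 : ℝ) ^ a) = 2 ^ a := by
  rw [← ENNReal.ofReal_rpow_of_pos two_pos, ENNReal.ofReal_ofNat]

lemma ENNReal.tsum_two_rpow_sub_mul_lt_top (a : ℝ) {δ : ℝ} (hδ : 0 < δ) :
    ∑' j : ℕ, (2 : ℝ≥0∞) ^ (a - j * δ) < ∞ := by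
  have hgeom (j : ℕ) : (2 : ℝ≥0∞) ^ (a - j * δ) = 2 ^ a * (2 ^ (-δ)) ^ j := by
    rw [← ENNReal.rpow_natCast, ← ENNReal.rpow_mul, ← ENNReal.two_rpow_add]
    ring_nf
  simp_rw [hgeom, ENNReal.tsum_mul_left, ENNReal.tsum_geometric]
  refine ENNReal.mul_lt_top (ENNReal.rpow_ne_top_of_ne_zero two_ne_zero ofNat_ne_top).lt_top
    (ENNReal.inv_lt_top.2 (tsub_pos_of_lt ?_))
  exact ENNReal.rpow_lt_one_of_one_lt_of_neg ENNReal.one_lt_two (neg_neg_of_pos hδ)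

lemma locallyIntegrable_of_integrableOn_closedBall_two_zpow {X E : Type*}
    [PseudoMetricSpace X] [MeasurableSpace X] {μ : Measure X} [NormedAddCommGroup E]
    {f : X → E} (c : X) (h : ∀ K : ℤ, IntegrableOn f (closedBall c (2 ^ K)) μ) :
    LocallyIntegrable f μ := by
  intro x
  obtain ⟨K, hK⟩ := pow_unbounded_of_one_lt (dist x c) one_lt_two
  exact ⟨_, closedBall_mem_nhds_of_mem (mem_ball.2 hK), by simpa using h K⟩

variable {n : ℕ}

lemma measurableSet_annulus (k : ℤ) : MeasurableSet (annulus n k) :=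
  measurable_norm measurableSet_Ioc

lemma annulus_subset_closedBall (k : ℤ) : annulus n k ⊆ closedBall 0 (2 ^ k) :=
  fun _ hx => mem_closedBall_zero_iff.2 hx.2

lemma exists_mem_annulus {x : Eu n} (hx : x ≠ 0) : ∃ k, x ∈ annulus n k := by
  obtain ⟨k, hk⟩ := exists_mem_Ioc_zpow (norm_pos_iff.2 hx) one_lt_two
  exact ⟨k + 1, by simpa [annulus] using hk⟩

lemma closedBall_two_zpow_subset_union_annulus (K : ℤ) :
    closedBall (0 : Eu n) (2 ^ K) ⊆ {0} ∪ ⋃ j : ℕ, annulus n (K - j) := by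
  intro x hx
  rcases eq_or_ne x 0 with rfl | hx0
  · exact Or.inl rfl
  obtain ⟨k, hk⟩ := exists_mem_annulus hx0
  have : k - 1 < K := (zpow_lt_zpow_iff_right₀ _root_.one_lt_two).1
    (hk.1.trans_le (mem_closedBall_zero_iff.1 hx))
  exact Or.inr (mem_iUnion.2 ⟨(K - k).toNat, by rwa [show K - (K - k).toNat = k by omega]⟩)

lemma compl_closedBall_two_zpow_subset_iUnion_annulus (K : ℤ) :
    (closedBall (0 : Eu n) (2 ^ K))ᶜ ⊆ ⋃ j : ℕ, annulus n (K + 1 + j) := by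
  intro x hx
  rw [mem_compl_iff, mem_closedBall_zero_iff, not_le] at hx
  obtain ⟨k, hk⟩ := exists_mem_annulus (norm_pos_iff.1 ((zpow_pos two_pos K).trans hx))
  have : K < k := (zpow_lt_zpow_iff_right₀ _root_.one_lt_two).1 (hx.trans_le hk.2)
  exact mem_iUnion.2 ⟨(k - K - 1).toNat, by rwa [show K + 1 + (k - K - 1).toNat = k by omega]⟩

lemma volume_annulus_le (k : ℤ) :
    volume (annulus n k) ≤ 2 ^ ((k : ℝ) * n) * volume (closedBall (0 : Eu n) 1) := by
  calc volume (annulus n k) ≤ volume (closedBall (0 : Eu n) (2 ^ k)) :=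
        measure_mono (annulus_subset_closedBall k)
    _ = _ := by
      rw [Measure.addHaar_closedBall' _ _ (by positivity), finrank_euclideanSpace_fin,
        ← ENNReal.ofReal_two_rpow, ← Real.rpow_intCast, ← Real.rpow_natCast,
        ← Real.rpow_mul zero_le_two]

lemma two_rpow_mul_eLpNorm_annulus_le_herzNorm {α : ℝ} {p : ℝ≥0∞} (hp : p ≠ 0) (q : ℝ≥0∞)
    (f : Eu n → ℝ) (k : ℤ) :
    2 ^ ((k : ℝ) * α) * eLpNorm ((annulus n k).indicator f) q volume ≤ herzNorm n α p q f := by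
  unfold herzNorm
  split_ifs with hp_top
  · exact le_iSup_of_le k le_rfl
  · have hp_pos : 0 < p.toReal := ENNReal.toReal_pos hp hp_top
    rw [← ENNReal.rpow_rpow_inv hp_pos.ne' (2 ^ ((k : ℝ) * α) * _), one_div]
    gcongr
    exact ENNReal.le_tsum k

lemma setLIntegral_annulus_enorm_le {E : Type*} [NormedAddCommGroup E] {q : ℝ≥0∞} (hq : 1 ≤ q)
    {f : Eu n → E} (hf : AEStronglyMeasurable f volume) {α : ℝ} {M : ℝ≥0∞} {k : ℤ}
    (hk : 2 ^ ((k : ℝ) * α) * eLpNorm ((annulus n k).indicator f) q volume ≤ M) :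
    ∫⁻ x in annulus n k, ‖f x‖ₑ ≤ 2 ^ ((k : ℝ) * (n * (1 - 1 / q.toReal) - α)) *
      (M * volume (closedBall (0 : Eu n) 1) ^ (1 - 1 / q.toReal)) := by
  set β := 1 - 1 / q.toReal
  set b := eLpNorm ((annulus n k).indicator f) q volume
  have hβ : 0 ≤ β := sub_nonneg.2 <| by
    rcases eq_or_ne q ∞ with rfl | hq_top
    · simp
    · exact div_le_one_of_le₀ (by simpa using ENNReal.toReal_mono hq_top hq) toReal_nonneg
  have holder : ∫⁻ x in annulus n k, ‖f x‖ₑ ≤ b * volume (annulus n k) ^ β := by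
    have := eLpNorm_le_eLpNorm_mul_rpow_measure_univ hq (hf.restrict (s := annulus n k))
    rwa [Measure.restrict_apply_univ, eLpNorm_one_eq_lintegral_enorm, toReal_one, div_one,
      ← eLpNorm_indicator_eq_eLpNorm_restrict (measurableSet_annulus k)] at this
  calc ∫⁻ x in annulus n k, ‖f x‖ₑ
      ≤ b * volume (annulus n k) ^ β := holder
    _ = 2 ^ (-((k : ℝ) * α)) * (2 ^ ((k : ℝ) * α) * b) * volume (annulus n k) ^ β := by
      rw [← mul_assoc, ← ENNReal.two_rpow_add, neg_add_cancel, rpow_zero, one_mul]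
    _ ≤ 2 ^ (-((k : ℝ) * α)) * M * (2 ^ ((k : ℝ) * n) * volume (closedBall (0 : Eu n) 1)) ^ β := by
      gcongr
      exact volume_annulus_le k
    _ = _ := by
      rw [ENNReal.mul_rpow_of_nonneg _ _ hβ, ← ENNReal.rpow_mul,
        show (k : ℝ) * (n * β - α) = -(k * α) + k * n * β by ring, ENNReal.two_rpow_add]
      ring

lemma setLIntegral_closedBall_lt_top_of_annulus_le {g : Eu n → ℝ≥0∞} {δ : ℝ} (hδ : 0 < δ)
    {D : ℝ≥0∞} (hD : D ≠ ∞) (h0 : g 0 ≠ ∞) {K : ℤ}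
    (hg : ∀ k ≤ K, ∫⁻ x in annulus n k, g x ≤ 2 ^ ((k : ℝ) * δ) * D) :
    ∫⁻ x in closedBall 0 (2 ^ K), g x < ∞ := by
  calc ∫⁻ x in closedBall 0 (2 ^ K), g x
      ≤ ∫⁻ x in {0} ∪ ⋃ j : ℕ, annulus n (K - j), g x :=
        lintegral_mono_set (closedBall_two_zpow_subset_union_annulus K)
    _ ≤ (∫⁻ x in {0}, g x) + ∑' j : ℕ, ∫⁻ x in annulus n (K - j), g x :=
        (lintegral_union_le _ _ _).trans (add_le_add le_rfl (lintegral_iUnion_le _ _))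
    _ ≤ g 0 * volume {(0 : Eu n)} + ∑' j : ℕ, 2 ^ ((K : ℝ) * δ - j * δ) * D := by
        rw [lintegral_singleton]
        refine add_le_add le_rfl
          (ENNReal.tsum_le_tsum fun j => (hg (K - j) (by omega)).trans_eq ?_)
        push_cast
        ring_nf
    _ < ∞ := by
        rw [ENNReal.tsum_mul_right]
        exact ENNReal.add_lt_top.2
          ⟨ENNReal.mul_lt_top h0.lt_top isCompact_singleton.measure_lt_top,
            ENNReal.mul_lt_top (ENNReal.tsum_two_rpow_sub_mul_lt_top _ hδ) hD.lt_top⟩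

lemma setLIntegral_compl_closedBall_lt_top_of_annulus_le {g : Eu n → ℝ≥0∞} {δ : ℝ}
    (hδ : 0 < δ) {D : ℝ≥0∞} (hD : D ≠ ∞) {K : ℤ}
    (hg : ∀ k > K, ∫⁻ x in annulus n k, g x ≤ 2 ^ (-((k : ℝ) * δ)) * D) :
    ∫⁻ x in (closedBall 0 (2 ^ K))ᶜ, g x < ∞ := by
  calc ∫⁻ x in (closedBall 0 (2 ^ K))ᶜ, g x
      ≤ ∫⁻ x in ⋃ j : ℕ, annulus n (K + 1 + j), g x :=
        lintegral_mono_set (compl_closedBall_two_zpow_subset_iUnion_annulus K)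
    _ ≤ ∑' j : ℕ, ∫⁻ x in annulus n (K + 1 + j), g x := lintegral_iUnion_le _ _
    _ ≤ ∑' j : ℕ, 2 ^ (-((K + 1 : ℝ) * δ) - j * δ) * D := by
        refine ENNReal.tsum_le_tsum fun j => (hg (K + 1 + j) (by omega)).trans_eq ?_
        push_cast
        ring_nf
    _ < ∞ := by
        rw [ENNReal.tsum_mul_right]
        exact ENNReal.mul_lt_top (ENNReal.tsum_two_rpow_sub_mul_lt_top _ hδ) hD.lt_top

lemma SchwartzMap.enorm_le_of_mem_annulus {F : Type*} [NormedAddCommGroup F] [NormedSpace ℝ F]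
    (φ : SchwartzMap (Eu n) F) (N : ℕ) {k : ℤ} {x : Eu n} (hx : x ∈ annulus n k) :
    ‖φ x‖ₑ ≤ 2 ^ (-((k : ℝ) * N)) * (2 ^ N * ENNReal.ofReal (SchwartzMap.seminorm ℝ N 0 φ)) := by
  set S := SchwartzMap.seminorm ℝ N 0 φ
  have hx' : (2 : ℝ) ^ ((k : ℝ) - 1) < ‖x‖ := by
    simpa [← Real.rpow_intCast] using hx.1
  have hφx : ‖φ x‖ ≤ 2 ^ (-(((k : ℝ) - 1) * N)) * S := by
    rw [Real.rpow_neg zero_le_two, ← div_eq_inv_mul, le_div_iff₀ (by positivity), mul_comm]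
    calc (2 : ℝ) ^ (((k : ℝ) - 1) * N) * ‖φ x‖ ≤ ‖x‖ ^ N * ‖φ x‖ := by
          rw [Real.rpow_mul zero_le_two, Real.rpow_natCast]
          gcongr
      _ ≤ S := φ.norm_pow_mul_le_seminorm ℝ N x
  calc ‖φ x‖ₑ = ENNReal.ofReal ‖φ x‖ := (ofReal_norm _).symm
    _ ≤ ENNReal.ofReal (2 ^ (-(((k : ℝ) - 1) * N)) * S) := ENNReal.ofReal_le_ofReal hφx
    _ = _ := by
      rw [ENNReal.ofReal_mul (by positivity), ENNReal.ofReal_two_rpow, ← mul_assoc,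
        ← ENNReal.rpow_natCast, ← ENNReal.two_rpow_add]
      ring_nf

lemma setLIntegral_annulus_mul_enorm_le {F : Type*} [NormedAddCommGroup F]
    [NormedSpace ℝ F] (φ : SchwartzMap (Eu n) F) (N : ℕ) {g : Eu n → ℝ≥0∞} {ε : ℝ}
    {D : ℝ≥0∞} {k : ℤ} (hk : ∫⁻ x in annulus n k, g x ≤ 2 ^ ((k : ℝ) * ε) * D) :
    ∫⁻ x in annulus n k, g x * ‖φ x‖ₑ ≤ 2 ^ (-((k : ℝ) * (N - ε))) *
      (2 ^ N * ENNReal.ofReal (SchwartzMap.seminorm ℝ N 0 φ) * D) := by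
  set C := 2 ^ N * ENNReal.ofReal (SchwartzMap.seminorm ℝ N 0 φ)
  have hC : (2 : ℝ≥0∞) ^ (-((k : ℝ) * N)) * C ≠ ∞ :=
    ENNReal.mul_ne_top (ENNReal.rpow_ne_top_of_ne_zero two_ne_zero ofNat_ne_top)
      (ENNReal.mul_ne_top (ENNReal.pow_ne_top ofNat_ne_top) ENNReal.ofReal_ne_top)
  calc ∫⁻ x in annulus n k, g x * ‖φ x‖ₑ
      ≤ ∫⁻ x in annulus n k, 2 ^ (-((k : ℝ) * N)) * C * g x :=
        setLIntegral_mono' (measurableSet_annulus k) fun x hx => by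
          rw [mul_comm]
          gcongr
          exact φ.enorm_le_of_mem_annulus N hx
    _ = 2 ^ (-((k : ℝ) * N)) * C * ∫⁻ x in annulus n k, g x := lintegral_const_mul' _ _ hC
    _ ≤ 2 ^ (-((k : ℝ) * N)) * C * (2 ^ ((k : ℝ) * ε) * D) := by gcongr
    _ = _ := by
      rw [show -((k : ℝ) * (N - ε)) = -(k * N) + k * ε by ring, ENNReal.two_rpow_add]
      ring

/-- For `1 ≤ p, q ≤ ∞` and `α < n(1 - 1/q)`, every member of the homogeneous Herz
space `K̇_q^{α,p}` is locally integrable on `ℝ^n` and pairs absolutely with every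
Schwartz function, hence defines a tempered distribution. -/
theorem herz_subset_L1loc_and_tempered (n : ℕ) (α : ℝ) (p q : ℝ≥0∞)
    (hp : 1 ≤ p) (hq : 1 ≤ q) (hα : α < (n:ℝ) * (1 - 1 / q.toReal))
    (f : Eu n → ℝ) (hf : Measurable f)
    (hfin : herzNorm n α p q f < ∞) :
    LocallyIntegrable f volume ∧
      ∀ φ : SchwartzMap (Eu n) ℝ, Integrable (fun x => f x * φ x) volume := by
  set ε := (n : ℝ) * (1 - 1 / q.toReal) - α
  set D := herzNorm n α p q f * volume (closedBall (0 : Eu n) 1) ^ (1 - 1 / q.toReal)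
  have hD : D ≠ ∞ := ENNReal.mul_ne_top hfin.ne <| ENNReal.rpow_ne_top_of_ne_zero
    (measure_closedBall_pos _ _ one_pos).ne' measure_closedBall_lt_top.ne
  have hann (k : ℤ) : ∫⁻ x in annulus n k, ‖f x‖ₑ ≤ 2 ^ ((k : ℝ) * ε) * D :=
    setLIntegral_annulus_enorm_le hq hf.aestronglyMeasurable
      (two_rpow_mul_eLpNorm_annulus_le_herzNorm (zero_lt_one.trans_le hp).ne' q f k)
  have hball (K : ℤ) : IntegrableOn f (closedBall 0 (2 ^ K)) :=
    ⟨hf.aestronglyMeasurable.restrict, setLIntegral_closedBall_lt_top_of_annulus_le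
      (g := (‖f ·‖ₑ)) (sub_pos.2 hα) hD enorm_ne_top fun k _ => hann k⟩
  refine ⟨locallyIntegrable_of_integrableOn_closedBall_two_zpow 0 hball, fun φ => ?_⟩
  obtain ⟨N, hN⟩ := exists_nat_gt ε
  have hnear : IntegrableOn (fun x => f x * φ x) (closedBall 0 (2 ^ (0 : ℤ))) :=
    (hball 0).mul_bdd φ.continuous.aestronglyMeasurable (ae_of_all _ (φ.norm_le_seminorm ℝ))
  have hfar : IntegrableOn (fun x => f x * φ x) (closedBall 0 (2 ^ (0 : ℤ)))ᶜ := by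
    refine ⟨(hf.aestronglyMeasurable.mul φ.continuous.aestronglyMeasurable).restrict, ?_⟩
    simp_rw [HasFiniteIntegral, enorm_mul]
    exact setLIntegral_compl_closedBall_lt_top_of_annulus_le (sub_pos.2 hN)
      (ENNReal.mul_ne_top (ENNReal.mul_ne_top (ENNReal.pow_ne_top ofNat_ne_top)
        ENNReal.ofReal_ne_top) hD)
      fun k _ => setLIntegral_annulus_mul_enorm_le φ N (hann k)
  simpa using hnear.union hfar
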